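/- arXiv:2302.02540 — 2 statements merged into one kernel-verified Lean document; each statement's English description precedes it below -/
import Mathlib

section
/- For every x > 0, 16/x² < 1/(2·log(cosh(x/4))). -/
/-! Comparing the power series termwise, `x ^ (2n) / (2n)! ≤ (x ^ 2 / 2) ^ n / n!` with strict
inequality at `n = 2`, gives `cosh x < exp (x ^ 2 / 2)` for `x ≠ 0`, i.e. `log (cosh x) < x ^ 2 / 2`.
At `x / 4` this says `0 < 2 log (cosh (x / 4)) < x ^ 2 / 16`, and inverting gives the claim. -/

namespace Real

theorem cosh_lt_exp_half_sq {x : ℝ} (hx : x ≠ 0) : cosh x < exp (x ^ 2 / 2) := by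
  rw [exp_eq_exp_ℝ]
  refine hasSum_lt (i := 2) (fun n ↦ ?_) ?_ x.hasSum_cosh
    (NormedSpace.expSeries_div_hasSum_exp (x ^ 2 / 2))
  · simp only [div_pow, ← pow_mul, div_div]
    refine div_le_div_of_nonneg_left ((even_two_mul n).pow_nonneg x) (by positivity) ?_
    exact_mod_cast Nat.two_pow_mul_factorial_le_factorial_two_mul n
  · have : 0 < x ^ 4 := by positivity
    norm_num [Nat.factorial]
    linarith

theorem log_cosh_lt_sq_div_two {x : ℝ} (hx : x ≠ 0) : log (cosh x) < x ^ 2 / 2 :=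
  (log_lt_iff_lt_exp (cosh_pos x)).2 (cosh_lt_exp_half_sq hx)

end Real

theorem sixteen_div_sq_lt_inv_two_log_cosh (x : ℝ) (hx : 0 < x) :
    16 / x ^ 2 < 1 / (2 * Real.log (Real.cosh (x / 4))) := by
  have hx4 : x / 4 ≠ 0 := by positivity
  have hpos : 0 < 2 * Real.log (Real.cosh (x / 4)) :=
    mul_pos two_pos (Real.log_pos (Real.one_lt_cosh.2 hx4))
  have hlt : 2 * Real.log (Real.cosh (x / 4)) < x ^ 2 / 16 := by
    linarith [Real.log_cosh_lt_sq_div_two hx4]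
  calc 16 / x ^ 2 = 1 / (x ^ 2 / 16) := by rw [one_div_div]
    _ < 1 / (2 * Real.log (Real.cosh (x / 4))) := one_div_lt_one_div_of_lt hpos hlt
end

section
/- For α > 1/2, ∫₀^∞ η_α(x)² · x dx = 4α²/(4α − 2), where η_α is the normalized Bessel function. In particular this quantity is minimized over α > 1/2 at α = 1, where it equals 2, so ∫₀^∞ η_α(x)² x dx ≥ 2 with equality iff α = 1. -/
/-- The normalized Bessel function `η_α(x) = 2^α Γ(α+1) J_α(x) / x^α`, given by its
power series, with `η_α(0) = 1`. -/
noncomputable def besselEta (α : ℝ) (x : ℝ) : ℝ :=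
  Real.Gamma (α + 1) *
    ∑' n : ℕ, (-1) ^ n / (n.factorial * Real.Gamma (n + α + 1)) * (x / 2) ^ (2 * n)

/-!
`η_α(x) = V((x/2)²)`, where `V(t) = Γ(α+1) ∑ (-1)ᵐ tᵐ / (m! Γ(m+α+1))` is an entire power series
solving `t V'' + (α+1) V' + V = 0`; hence `u = η_α` solves `x u'' + (2α+1) u' + x u = 0` with
`u(0) = 1`. For any solution of this equation, `N = (x u' + 2α u)² + (x u)²` satisfies
`N' = (2 - 4α) x u²`, so `∫₀^∞ x u² = (N(0) - N(∞)) / (4α - 2)` with `N(0) = 4α² u(0)²`.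
To see `N(∞) = 0`, pass to the Liouville normal form `w = x^(α+1/2) u`, which solves
`w'' + w = K w / x²` with `K = α² - 1/4 ≥ 0`: the energy `w² + w'²` stays bounded because
`(w² + w'²) e^(K/x)` is nonincreasing, and `x^(2α+1) N` is `O(x²)` in terms of `w, w'`, so
`N = O(x^(1-2α))`. Finally `4α²/(4α-2) = 2 + 4(α-1)²/(4α-2)`.
-/

open Filter MeasureTheory Set Topology

noncomputable def powerSeriesSum (a : ℕ → ℝ) (x : ℝ) : ℝ := ∑' n, a n * x ^ n

def derivCoeff (a : ℕ → ℝ) (n : ℕ) : ℝ := (n + 1) * a (n + 1)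

def IsEntireCoeff (a : ℕ → ℝ) : Prop := ∀ r, 0 ≤ r → Summable fun n => |a n| * r ^ n

theorem powerSeriesSum_zero (a : ℕ → ℝ) : powerSeriesSum a 0 = a 0 := by
  rw [powerSeriesSum, tsum_eq_single 0 fun n hn => by simp [hn]]
  simp

theorem abs_derivCoeff_mul_pow_le (a : ℕ → ℝ) {r R : ℝ} (hr : 0 ≤ r) (hrR : r ≤ R) (hR : 1 ≤ R)
    (n : ℕ) : |derivCoeff a n| * r ^ n ≤ |a (n + 1)| * (2 * R) ^ (n + 1) := by
  have hn : (n + 1 : ℝ) ≤ 2 ^ (n + 1) := by exact_mod_cast Nat.lt_two_pow_self.le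
  have hrn : r ^ n ≤ R ^ (n + 1) :=
    (pow_le_pow_left₀ hr hrR n).trans (pow_le_pow_right₀ hR n.le_succ)
  rw [derivCoeff, abs_mul, abs_of_pos (by positivity : (0 : ℝ) < n + 1), mul_pow]
  calc (n + 1) * |a (n + 1)| * r ^ n = |a (n + 1)| * ((n + 1) * r ^ n) := by ring
    _ ≤ |a (n + 1)| * (2 ^ (n + 1) * R ^ (n + 1)) := by gcongr

namespace IsEntireCoeff

variable {a : ℕ → ℝ}

theorem summable (ha : IsEntireCoeff a) (x : ℝ) : Summable fun n => a n * x ^ n :=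
  .of_norm_bounded (ha |x| (abs_nonneg x)) fun n => by simp

theorem summable_succ (ha : IsEntireCoeff a) {r : ℝ} (hr : 0 ≤ r) :
    Summable fun n => |a (n + 1)| * r ^ (n + 1) :=
  (summable_nat_add_iff 1).2 (ha r hr)

protected theorem derivCoeff (ha : IsEntireCoeff a) : IsEntireCoeff (derivCoeff a) := fun r hr =>
  .of_nonneg_of_le (fun n => by positivity)
    (abs_derivCoeff_mul_pow_le a hr (le_max_left r 1) (le_max_right r 1))
    (ha.summable_succ (by positivity))

theorem hasDerivAt (ha : IsEntireCoeff a) (x : ℝ) :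
    HasDerivAt (powerSeriesSum a) (powerSeriesSum (derivCoeff a) x) x := by
  have hsplit : powerSeriesSum a = fun y => a 0 + ∑' n, a (n + 1) * y ^ (n + 1) := by
    ext y
    simpa [powerSeriesSum] using (ha.summable y).tsum_eq_zero_add
  set R := |x| + 1
  have hR : 1 ≤ R := by linarith [abs_nonneg x]
  rw [hsplit, powerSeriesSum]
  refine .const_add _ (hasDerivAt_tsum_of_isPreconnected (g := fun n y => a (n + 1) * y ^ (n + 1))
    (g' := fun n y => derivCoeff a n * y ^ n) (ha.summable_succ (r := 2 * R) (by positivity))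
    Metric.isOpen_ball (convex_ball (0 : ℝ) R).isPreconnected (fun n y _ => ?_)
    (fun n y hy => ?_) (Metric.mem_ball_self (by positivity)) ?_ ?_)
  · refine ((hasDerivAt_pow (n + 1) y).const_mul (a (n + 1))).congr_deriv ?_
    rw [derivCoeff]
    push_cast
    ring
  · rw [mem_ball_zero_iff, Real.norm_eq_abs] at hy
    rw [Real.norm_eq_abs, abs_mul, abs_pow]
    exact abs_derivCoeff_mul_pow_le a (abs_nonneg y) hy.le hR n
  · simp
  · simp [R]

theorem summable_natCast_mul (ha : IsEntireCoeff a) (x : ℝ) :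
    Summable fun n : ℕ => n * a n * x ^ n := by
  refine (summable_nat_add_iff 1).1 (((ha.derivCoeff.summable x).mul_left x).congr fun n => ?_)
  rw [derivCoeff]
  push_cast
  ring

theorem mul_powerSeriesSum_derivCoeff (ha : IsEntireCoeff a) (x : ℝ) :
    x * powerSeriesSum (derivCoeff a) x = ∑' n : ℕ, n * a n * x ^ n := by
  rw [(ha.summable_natCast_mul x).tsum_eq_zero_add, powerSeriesSum, ← tsum_mul_left]
  simp only [Nat.cast_zero, zero_mul, zero_add]
  exact tsum_congr fun n => by rw [derivCoeff]; push_cast; ring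

theorem ode_of_recurrence {β : ℝ} (ha : IsEntireCoeff a)
    (hrec : ∀ n : ℕ, (n + 1) * (n + β) * a (n + 1) + a n = 0) (t : ℝ) :
    t * powerSeriesSum (derivCoeff (derivCoeff a)) t + β * powerSeriesSum (derivCoeff a) t
      + powerSeriesSum a t = 0 := by
  have ha' := ha.derivCoeff
  rw [mul_powerSeriesSum_derivCoeff ha', powerSeriesSum, powerSeriesSum, ← tsum_mul_left,
    ← Summable.tsum_add, ← Summable.tsum_add]
  · refine (tsum_congr fun n => ?_).trans tsum_zero
    rw [derivCoeff]
    linear_combination t ^ n * hrec n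
  · exact (ha'.summable_natCast_mul t).add ((ha'.summable t).mul_left β)
  · exact ha.summable t
  · exact ha'.summable_natCast_mul t
  · exact (ha'.summable t).mul_left β

end IsEntireCoeff

noncomputable def besselEtaCoeff (α : ℝ) (m : ℕ) : ℝ :=
  Real.Gamma (α + 1) * ((-1) ^ m / (m.factorial * Real.Gamma (m + α + 1)))

theorem besselEta_eq_powerSeriesSum (α x : ℝ) :
    besselEta α x = powerSeriesSum (besselEtaCoeff α) ((x / 2) ^ 2) := by
  rw [besselEta, powerSeriesSum, ← tsum_mul_left]
  exact tsum_congr fun m => by rw [besselEtaCoeff, pow_mul]; ring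

section

variable {α : ℝ}

theorem besselEtaCoeff_zero (hα : -1 < α) : besselEtaCoeff α 0 = 1 := by
  have : Real.Gamma (α + 1) ≠ 0 := (Real.Gamma_pos_of_pos (by linarith)).ne'
  simp [besselEtaCoeff, this]

theorem besselEta_zero (hα : -1 < α) : besselEta α 0 = 1 := by
  rw [besselEta_eq_powerSeriesSum, zero_div, sq, mul_zero, powerSeriesSum_zero,
    besselEtaCoeff_zero hα]

theorem besselEtaCoeff_recurrence (hα : -1 < α) (m : ℕ) :
    (m + 1) * (m + (α + 1)) * besselEtaCoeff α (m + 1) + besselEtaCoeff α m = 0 := by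
  have hpos : 0 < (m : ℝ) + α + 1 := by linarith [m.cast_nonneg (α := ℝ)]
  have hΓ : Real.Gamma ((m + 1 : ℕ) + α + 1) = ((m : ℝ) + α + 1) * Real.Gamma (m + α + 1) := by
    rw [← Real.Gamma_add_one hpos.ne']
    push_cast
    ring_nf
  have : Real.Gamma (m + α + 1) ≠ 0 := (Real.Gamma_pos_of_pos hpos).ne'
  simp only [besselEtaCoeff, hΓ, Nat.factorial_succ, pow_succ]
  push_cast
  field_simp
  ring

theorem abs_besselEtaCoeff_mul_factorial_le (hα : 0 ≤ α) (m : ℕ) :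
    |besselEtaCoeff α m| * m.factorial ≤ 1 := by
  induction m with
  | zero => simp [besselEtaCoeff_zero (by linarith : -1 < α)]
  | succ m ih =>
    have hrec : (m + 1) * (m + (α + 1)) * |besselEtaCoeff α (m + 1)| = |besselEtaCoeff α m| := by
      rw [← abs_neg (besselEtaCoeff α m),
        ← eq_neg_of_add_eq_zero_left (besselEtaCoeff_recurrence (by linarith) m), abs_mul,
        abs_of_nonneg (a := ((m : ℝ) + 1) * (m + (α + 1))) (by positivity)]
    calc |besselEtaCoeff α (m + 1)| * (m + 1).factorial
        ≤ (m + 1) * (m + (α + 1)) * |besselEtaCoeff α (m + 1)| * m.factorial := by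
          push_cast [Nat.factorial_succ]
          have : 0 ≤ ((m : ℝ) + 1) * (m + α) * |besselEtaCoeff α (m + 1)| * m.factorial := by
            positivity
          linarith
      _ ≤ 1 := by rwa [hrec]

theorem isEntireCoeff_besselEtaCoeff (hα : 0 ≤ α) : IsEntireCoeff (besselEtaCoeff α) := by
  intro r hr
  refine (Real.summable_pow_div_factorial r).of_nonneg_of_le (fun n => by positivity) fun n => ?_
  have := abs_besselEtaCoeff_mul_factorial_le hα n
  rw [le_div_iff₀ (by positivity)]
  calc |besselEtaCoeff α n| * r ^ n * n.factorial
      = |besselEtaCoeff α n| * n.factorial * r ^ n := by ring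
    _ ≤ 1 * r ^ n := by gcongr
    _ = r ^ n := one_mul _

end

structure SolvesNormalizedBesselODE (α : ℝ) (u u' u'' : ℝ → ℝ) : Prop where
  hasDerivAt : ∀ x, HasDerivAt u (u' x) x
  hasDerivAt_deriv : ∀ x, HasDerivAt u' (u'' x) x
  ode : ∀ x, x * u'' x + (2 * α + 1) * u' x + x * u x = 0

theorem solvesNormalizedBesselODE_comp_quarter_sq {α : ℝ} {V V' V'' : ℝ → ℝ}
    (hV : ∀ t, HasDerivAt V (V' t) t) (hV' : ∀ t, HasDerivAt V' (V'' t) t)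
    (hode : ∀ t, t * V'' t + (α + 1) * V' t + V t = 0) :
    SolvesNormalizedBesselODE α (fun x => V ((x / 2) ^ 2)) (fun x => x / 2 * V' ((x / 2) ^ 2))
      (fun x => V' ((x / 2) ^ 2) / 2 + (x / 2) ^ 2 * V'' ((x / 2) ^ 2)) := by
  have hsq (x : ℝ) : HasDerivAt (fun y : ℝ => (y / 2) ^ 2) (x / 2) x :=
    (((hasDerivAt_id' x).div_const 2).fun_pow 2).congr_deriv (by norm_num; ring)
  refine ⟨fun x => ?_, fun x => ?_, fun x => ?_⟩
  · exact ((hV _).comp x (hsq x)).congr_deriv (mul_comm _ _)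
  · refine (((hasDerivAt_id' x).div_const 2).fun_mul ((hV' _).comp x (hsq x))).congr_deriv ?_
    simp only [Function.comp_apply]
    ring
  · linear_combination x * hode ((x / 2) ^ 2)

theorem solvesNormalizedBesselODE_besselEta {α : ℝ} (hα : 0 ≤ α) :
    ∃ u' u'', SolvesNormalizedBesselODE α (besselEta α) u' u'' := by
  have hc := isEntireCoeff_besselEtaCoeff hα
  have := solvesNormalizedBesselODE_comp_quarter_sq hc.hasDerivAt hc.derivCoeff.hasDerivAt
    (hc.ode_of_recurrence (besselEtaCoeff_recurrence (by linarith)))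
  rw [← funext (besselEta_eq_powerSeriesSum α)] at this
  exact ⟨_, _, this⟩

theorem sq_add_sq_le_mul_exp {w w' : ℝ → ℝ} {K : ℝ} (hK : 0 ≤ K)
    (hw : ∀ x ≥ 1, HasDerivAt w (w' x) x)
    (hw' : ∀ x ≥ 1, HasDerivAt w' ((K / x ^ 2 - 1) * w x) x) {x : ℝ} (hx : 1 ≤ x) :
    w x ^ 2 + w' x ^ 2 ≤ (w 1 ^ 2 + w' 1 ^ 2) * Real.exp K := by
  set φ := fun y => (w y ^ 2 + w' y ^ 2) * Real.exp (K / y)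
  have hφ : ∀ y ≥ 1, HasDerivAt φ (-(Real.exp (K / y) * K * (w y - w' y) ^ 2 / y ^ 2)) y := by
    intro y hy
    have hKy : HasDerivAt (fun y => K / y) (-K / y ^ 2) y := by
      simpa using (hasDerivAt_const y K).fun_div (hasDerivAt_id' y) (by positivity)
    refine ((((hw y hy).fun_pow 2).fun_add ((hw' y hy).fun_pow 2)).fun_mul hKy.exp).congr_deriv ?_
    field_simp
    ring
  have hanti : AntitoneOn φ (Ici 1) := by
    refine antitoneOn_of_hasDerivWithinAt_nonpos (convex_Ici 1)
      (f' := fun y => -(Real.exp (K / y) * K * (w y - w' y) ^ 2 / y ^ 2))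
      (fun y hy => (hφ y hy).continuousAt.continuousWithinAt) (fun y hy => ?_) (fun y hy => ?_)
    · rw [interior_Ici] at hy
      exact (hφ y hy.le).hasDerivWithinAt
    · rw [neg_nonpos]
      positivity
  calc w x ^ 2 + w' x ^ 2 ≤ φ x :=
        le_mul_of_one_le_right (by positivity) (Real.one_le_exp (by positivity))
    _ ≤ φ 1 := hanti self_mem_Ici hx hx
    _ = (w 1 ^ 2 + w' 1 ^ 2) * Real.exp K := by simp [φ]

def momentEnergy (α : ℝ) (u u' : ℝ → ℝ) (x : ℝ) : ℝ :=
  (x * u' x + 2 * α * u x) ^ 2 + (x * u x) ^ 2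

namespace SolvesNormalizedBesselODE

variable {α : ℝ} {u u' u'' : ℝ → ℝ}

theorem hasDerivAt_momentEnergy (h : SolvesNormalizedBesselODE α u u' u'') (x : ℝ) :
    HasDerivAt (momentEnergy α u u') ((2 - 4 * α) * (u x ^ 2 * x)) x := by
  have hu := h.hasDerivAt x
  refine ((((hasDerivAt_id' x).fun_mul (h.hasDerivAt_deriv x)).fun_add
    (hu.const_mul (2 * α))).fun_pow 2 |>.fun_add
    (((hasDerivAt_id' x).fun_mul hu).fun_pow 2)).congr_deriv ?_
  linear_combination (2 * (x * u' x + 2 * α * u x)) * h.ode x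

/-- `w = x^(α+1/2) u`, written as `x^(α-1/2) (x u)` so that a single power of `x` occurs. -/
theorem hasDerivAt_liouville (h : SolvesNormalizedBesselODE α u u' u'') {x : ℝ} (hx : 0 < x) :
    HasDerivAt (fun y => y ^ (α - 1 / 2) * (y * u y))
      (x ^ (α - 1 / 2) * ((α + 1 / 2) * u x + x * u' x)) x := by
  refine ((Real.hasDerivAt_rpow_const (Or.inl hx.ne')).fun_mul
    ((hasDerivAt_id' x).fun_mul (h.hasDerivAt x))).congr_deriv ?_
  rw [Real.rpow_sub_one hx.ne']
  generalize x ^ (α - 1 / 2) = s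
  field_simp
  ring

theorem hasDerivAt_liouville_deriv (h : SolvesNormalizedBesselODE α u u' u'') {x : ℝ}
    (hx : 0 < x) :
    HasDerivAt (fun y => y ^ (α - 1 / 2) * ((α + 1 / 2) * u y + y * u' y))
      (((α ^ 2 - 1 / 4) / x ^ 2 - 1) * (x ^ (α - 1 / 2) * (x * u x))) x := by
  refine ((Real.hasDerivAt_rpow_const (Or.inl hx.ne')).fun_mul
    (((h.hasDerivAt x).const_mul (α + 1 / 2)).fun_add
      ((hasDerivAt_id' x).fun_mul (h.hasDerivAt_deriv x)))).congr_deriv ?_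
  rw [Real.rpow_sub_one hx.ne']
  generalize x ^ (α - 1 / 2) = s
  field_simp
  linear_combination 16 * s * x * h.ode x

theorem exists_rpow_sq_mul_momentEnergy_le (h : SolvesNormalizedBesselODE α u u' u'')
    (hα : 1 / 2 ≤ α) : ∃ C, ∀ x ≥ 1, (x ^ (α - 1 / 2)) ^ 2 * momentEnergy α u u' x ≤ C := by
  set w := fun y => y ^ (α - 1 / 2) * (y * u y)
  set w' := fun y => y ^ (α - 1 / 2) * ((α + 1 / 2) * u y + y * u' y)
  refine ⟨(2 * (α - 1 / 2) ^ 2 + 2) * ((w 1 ^ 2 + w' 1 ^ 2) * Real.exp (α ^ 2 - 1 / 4)),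
    fun x hx => ?_⟩
  have hG := sq_add_sq_le_mul_exp (w := w) (w' := w') (by nlinarith)
    (fun y hy => h.hasDerivAt_liouville (by linarith))
    (fun y hy => h.hasDerivAt_liouville_deriv (by linarith)) hx
  have hN : x ^ 2 * ((x ^ (α - 1 / 2)) ^ 2 * momentEnergy α u u' x)
      = (x * w' x + (α - 1 / 2) * w x) ^ 2 + (x * w x) ^ 2 := by
    simp only [w, w', momentEnergy]
    ring
  have hx2 : 1 ≤ x ^ 2 := one_le_pow₀ hx
  refine le_of_mul_le_mul_left ?_ (by positivity : (0 : ℝ) < x ^ 2)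
  rw [hN]
  calc (x * w' x + (α - 1 / 2) * w x) ^ 2 + (x * w x) ^ 2
      ≤ x ^ 2 * ((2 * (α - 1 / 2) ^ 2 + 2) * (w x ^ 2 + w' x ^ 2)) := by
        nlinarith [sq_nonneg (x * w' x - (α - 1 / 2) * w x), sq_nonneg (x * w x),
          mul_nonneg (sub_nonneg.2 hx2) (sq_nonneg ((α - 1 / 2) * w x)),
          sq_nonneg ((α - 1 / 2) * x * w' x)]
    _ ≤ _ := by gcongr

theorem tendsto_momentEnergy_atTop (h : SolvesNormalizedBesselODE α u u' u'') (hα : 1 / 2 < α) :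
    Tendsto (momentEnergy α u u') atTop (𝓝 0) := by
  obtain ⟨C, hC⟩ := h.exists_rpow_sq_mul_momentEnergy_le hα.le
  have hs : Tendsto (fun x : ℝ => (x ^ (α - 1 / 2)) ^ 2) atTop atTop :=
    (tendsto_pow_atTop two_ne_zero).comp (tendsto_rpow_atTop (by linarith))
  refine squeeze_zero' (Eventually.of_forall fun x => add_nonneg (sq_nonneg _) (sq_nonneg _))
    ((eventually_ge_atTop 1).mono fun x hx => ?_) ((tendsto_const_nhds (x := C)).div_atTop hs)
  rw [le_div_iff₀ (by positivity : (0 : ℝ) < (x ^ (α - 1 / 2)) ^ 2), mul_comm]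
  exact hC x hx

theorem integral_sq_mul (h : SolvesNormalizedBesselODE α u u' u'') (hα : 1 / 2 < α) :
    ∫ x in Ioi 0, u x ^ 2 * x = 4 * α ^ 2 * u 0 ^ 2 / (4 * α - 2) := by
  have hα' : 2 - 4 * α ≠ 0 := by linarith
  have hα'' : 4 * α - 2 ≠ 0 := by linarith
  have := integral_Ioi_of_hasDerivAt_of_nonneg' (a := 0)
    (g := fun x => momentEnergy α u u' x / (2 - 4 * α)) (g' := fun x => u x ^ 2 * x)
    (fun x _ => ((h.hasDerivAt_momentEnergy x).div_const _).congr_deriv (by field_simp))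
    (fun x hx => by positivity [mem_Ioi.1 hx]) ((h.tendsto_momentEnergy_atTop hα).div_const _)
  rw [this, momentEnergy]
  field_simp
  ring

end SolvesNormalizedBesselODE

theorem besselEta_sq_first_moment (α : ℝ) (hα : 1 / 2 < α) :
    (∫ x in Set.Ioi (0 : ℝ), (besselEta α x) ^ 2 * x) = 4 * α ^ 2 / (4 * α - 2) ∧
      2 ≤ ∫ x in Set.Ioi (0 : ℝ), (besselEta α x) ^ 2 * x ∧
      ((∫ x in Set.Ioi (0 : ℝ), (besselEta α x) ^ 2 * x) = 2 ↔ α = 1) := by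
  obtain ⟨u', u'', h⟩ := solvesNormalizedBesselODE_besselEta (by linarith : 0 ≤ α)
  have hI : ∫ x in Ioi 0, besselEta α x ^ 2 * x = 4 * α ^ 2 / (4 * α - 2) := by
    rw [h.integral_sq_mul hα, besselEta_zero (by linarith), one_pow, mul_one]
  have hpos : 0 < 4 * α - 2 := by linarith
  have hsplit : 4 * α ^ 2 / (4 * α - 2) = 2 + 4 * (α - 1) ^ 2 / (4 * α - 2) := by
    rw [show 4 * α ^ 2 = 2 * (4 * α - 2) + 4 * (α - 1) ^ 2 by ring, add_div,
      mul_div_cancel_right₀ _ hpos.ne']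
  refine ⟨hI, ?_, ?_⟩ <;> rw [hI, hsplit]
  · exact le_add_of_nonneg_right (by positivity)
  · rw [add_eq_left, div_eq_zero_iff, or_iff_left hpos.ne', mul_eq_zero, or_iff_right four_ne_zero,
      pow_eq_zero_iff two_ne_zero, sub_eq_zero]
end
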